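/- arXiv:2310.15527 — 3 statements merged into one kernel-verified Lean document; each statement's English description precedes it below -/
import Mathlib

section
/- Let U be an infinite type, k ∈ ω, and let X be a finite family of finite subsets of U, each of cardinality at most k. Then there exist a family X* of subsets of U and a bijection i : X → X* such that: (1) every member of X* has cardinality exactly k; (2) for all x ∈ X, x ⊆ i(x); (3) for all x ∈ X, (i(x) \ x) ∩ ⋃X = ∅; and (4) for every X₀ ⊆ X, X₀ is a sunflower if and only if the image i[X₀] is a sunflower. -/
/-!
Pad each `x ∈ X` with `k - |x|` fresh points, taken outside the finite set `⋃₀ X` and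
different for different members of `X`. The padding of `x` is disjoint from every `y ∈ X`
and from the padding of every other member, so `i x ∩ i y = x ∩ y` for distinct
`x, y ∈ X`. Hence `i` is injective on `X` (as `x ⊆ i x`) and leaves all pairwise
intersections, and with them the sunflower property of every subfamily, unchanged.
-/

/-- A family of sets is a sunflower if all pairwise intersections of
distinct members agree. -/
def IsSunflower {U : Type*} (X : Set (Set U)) : Prop :=
  ∀ A₀ ∈ X, ∀ A₁ ∈ X, ∀ B₀ ∈ X, ∀ B₁ ∈ X,
    A₀ ≠ A₁ → B₀ ≠ B₁ → A₀ ∩ A₁ = B₀ ∩ B₁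

theorem Set.Infinite.exists_pairwiseDisjoint_subsets_ncard_eq {α ι : Type*} {T : Set α}
    (hT : T.Infinite) (s : Finset ι) (n : ι → ℕ) :
    ∃ P : ι → Set α, (∀ i ∈ s, P i ⊆ T ∧ (P i).Finite ∧ (P i).ncard = n i) ∧
      (s : Set ι).PairwiseDisjoint P := by
  classical
  induction s using Finset.induction_on with
  | empty => exact ⟨fun _ => ∅, by simp, by simp⟩
  | insert a s ha ih =>
    obtain ⟨P, hP, hdisj⟩ := ih
    have hused : (⋃ i ∈ s, P i).Finite := s.finite_toSet.biUnion fun i hi => (hP i hi).2.1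
    obtain ⟨Q, hQ, hQfin, hQcard⟩ := (hT.sdiff hused).exists_subset_ncard_eq (n a)
    have hupdate : ∀ i ∈ s, Function.update P a Q i = P i := fun i hi =>
      Function.update_of_ne (ne_of_mem_of_not_mem hi ha) _ _
    refine ⟨Function.update P a Q, ?_, ?_⟩
    · intro i hi
      rcases Finset.mem_insert.1 hi with rfl | hi
      · simpa using ⟨hQ.trans Set.sdiff_subset, hQfin, hQcard⟩
      · simpa [hupdate i hi] using hP i hi
    · rw [Finset.coe_insert]
      refine (hdisj.mono_on fun i hi => (hupdate i hi).le).insert fun j hj _ => ?_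
      rw [Function.update_self, hupdate j hj]
      exact Set.disjoint_of_subset_left hQ
        (Set.disjoint_sdiff_left.mono_right (Set.subset_biUnion_of_mem (u := P) hj))

theorem Set.union_inter_union_eq_inter {α : Type*} {a b c d : Set α}
    (had : Disjoint a d) (hcb : Disjoint c b) (hcd : Disjoint c d) :
    (a ∪ c) ∩ (b ∪ d) = a ∩ b := by
  rw [Set.union_inter_distrib_right, Set.inter_union_distrib_left,
    Set.inter_union_distrib_left, had.inter_eq, hcb.inter_eq, hcd.inter_eq]
  simp

section Sunflower

variable {U : Type*} {X : Set (Set U)} {i : Set U → Set U}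

theorem injOn_of_inter_eq_inter (hsub : ∀ x ∈ X, x ⊆ i x)
    (hinter : ∀ x ∈ X, ∀ y ∈ X, x ≠ y → i x ∩ i y = x ∩ y) : Set.InjOn i X := by
  intro x hx y hy hxy
  by_contra hne
  have hx_le : x ⊆ y := fun u hu => by
    have : u ∈ i x ∩ i y := ⟨hsub x hx hu, hxy ▸ hsub x hx hu⟩
    exact (hinter x hx y hy hne ▸ this).2
  have hy_le : y ⊆ x := fun u hu => by
    have : u ∈ i x ∩ i y := ⟨hxy ▸ hsub y hy hu, hsub y hy hu⟩
    exact (hinter x hx y hy hne ▸ this).1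
  exact hne (hx_le.antisymm hy_le)

theorem isSunflower_iff_isSunflower_image (hinj : Set.InjOn i X)
    (hinter : ∀ x ∈ X, ∀ y ∈ X, x ≠ y → i x ∩ i y = x ∩ y) :
    IsSunflower X ↔ IsSunflower (i '' X) := by
  simp only [IsSunflower, Set.forall_mem_image]
  refine forall₂_congr fun a ha => forall₂_congr fun b hb =>
    forall₂_congr fun c hc => forall₂_congr fun d hd => ?_
  rw [hinj.ne_iff ha hb, hinj.ne_iff hc hd]
  refine imp_congr_right fun hab => imp_congr_right fun hcd => ?_
  rw [hinter a ha b hb hab, hinter c hc d hd hcd]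

end Sunflower

/-- Any finite family `X` of finite subsets of an infinite type, each of
cardinality at most `k`, can be enlarged, set by set, to a family `X*` of sets
of cardinality exactly `k`, where the added points avoid `⋃ X`, in such a way
that sunflowers among subfamilies are exactly preserved. -/
theorem pad_family {U : Type*} [Infinite U] (k : ℕ) (X : Finset (Set U))
    (hX : ∀ x ∈ X, x.Finite ∧ x.ncard ≤ k) :
    ∃ (Xstar : Finset (Set U)) (i : Set U → Set U),
      Set.BijOn i (X : Set (Set U)) (Xstar : Set (Set U)) ∧
      (∀ x ∈ Xstar, x.Finite ∧ x.ncard = k) ∧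
      (∀ x ∈ X, x ⊆ i x) ∧
      (∀ x ∈ X, (i x \ x) ∩ ⋃₀ (X : Set (Set U)) = ∅) ∧
      (∀ X₀ ⊆ X, (IsSunflower (X₀ : Set (Set U)) ↔
        IsSunflower (i '' (X₀ : Set (Set U))))) := by
  classical
  set S := ⋃₀ (X : Set (Set U))
  have hSfin : S.Finite := X.finite_toSet.sUnion fun x hx => (hX x hx).1
  obtain ⟨P, hP, hdisj⟩ := hSfin.infinite_compl.exists_pairwiseDisjoint_subsets_ncard_eq X
    fun x => k - x.ncard
  have hxS : ∀ x ∈ X, x ⊆ S := fun x hx => Set.subset_sUnion_of_mem hx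
  have hPS : ∀ x ∈ X, Disjoint (P x) S := fun x hx =>
    Set.subset_compl_iff_disjoint_right.1 (hP x hx).1
  have hinter : ∀ x ∈ (X : Set (Set U)), ∀ y ∈ (X : Set (Set U)), x ≠ y →
      (x ∪ P x) ∩ (y ∪ P y) = x ∩ y := fun x hx y hy hxy =>
    Set.union_inter_union_eq_inter ((hPS y hy).symm.mono_left (hxS x hx))
      ((hPS x hx).mono_right (hxS y hy)) (hdisj hx hy hxy)
  have hsub : ∀ x ∈ (X : Set (Set U)), x ⊆ x ∪ P x := fun _ _ => Set.subset_union_left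
  have hinj := injOn_of_inter_eq_inter hsub hinter
  refine ⟨X.image fun x => x ∪ P x, fun x => x ∪ P x, ?_, ?_, hsub, ?_, ?_⟩
  · simpa only [Finset.coe_image] using hinj.bijOn_image
  · simp only [Finset.mem_image, forall_exists_index, and_imp]
    rintro _ x hx rfl
    obtain ⟨-, hPfin, hPcard⟩ := hP x hx
    refine ⟨(hX x hx).1.union hPfin, ?_⟩
    rw [Set.ncard_union_eq ((hPS x hx).symm.mono_left (hxS x hx)) (hX x hx).1 hPfin, hPcard]
    exact Nat.add_sub_cancel' (hX x hx).2
  · intro x hx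
    rw [Set.union_sdiff_left]
    exact Set.disjoint_iff_inter_eq_empty.1 ((hPS x hx).mono_left Set.sdiff_subset)
  · intro X₀ hX₀
    have hX₀X : (X₀ : Set (Set U)) ⊆ X := Finset.coe_subset.2 hX₀
    exact isSunflower_iff_isSunflower_image (hinj.mono hX₀X)
      fun x hx y hy => hinter x (hX₀X hx) y (hX₀X hy)
end

section
/- Let L be the first-order language consisting of a single unary function symbol f. For every k ≥ 1 there is a countably infinite, locally finite L-structure M_k such that: (1) M_k is ultrahomogeneous; (2) M_k has the strong amalgamation property; (3) M_k is totally categorical; and (4) for every n ∈ ω, every family X of finitely generated substructures of M_k, each of cardinality at most k, with |X| ≥ n, contains a subfamily of size n that is a sunflower (i.e., SF[M_k](n,k) = n). -/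
open FirstOrder FirstOrder.Language

universe w

/-- A structure is locally finite if every finite subset is contained in a
finite substructure. -/
def LocallyFiniteStr (L : FirstOrder.Language) (M : Type*) [L.Structure M] : Prop :=
  ∀ s : Set M, s.Finite → ∃ S : L.Substructure M, s ⊆ (S : Set M) ∧ (S : Set M).Finite

/-- The strong amalgamation property over finitely generated substructures. -/
def HasSAP (L : FirstOrder.Language) (M : Type*) [L.Structure M] : Prop :=
  ∀ (A B C : L.Substructure M), A.FG → B.FG → C.FG →
    ∀ (i₀ : A ↪[L] B) (j₀ : A ↪[L] C),
      ∃ (i₁ : B ↪[L] M) (j₁ : C ↪[L] M),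
        i₁.comp i₀ = j₁.comp j₀ ∧
        Set.range ⇑i₁ ∩ Set.range ⇑j₁ = Set.range ⇑(i₁.comp i₀)

/-- Totally categorical: the complete first-order theory of the structure is
`κ`-categorical for every infinite cardinal `κ`. -/
def TotallyCategorical (L : FirstOrder.Language) (M : Type*) [L.Structure M] : Prop :=
  ∀ κ : Cardinal.{w}, Cardinal.aleph0 ≤ κ → κ.Categorical (L.completeTheory M)

/-- A family of substructures is a sunflower if all pairwise intersections of the
underlying sets of distinct members agree. -/
def SunflowerSub (L : FirstOrder.Language) (M : Type*) [L.Structure M]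
    (X : Set (L.Substructure M)) : Prop :=
  ∀ A₀ ∈ X, ∀ A₁ ∈ X, ∀ B₀ ∈ X, ∀ B₁ ∈ X,
    A₀ ≠ A₁ → B₀ ≠ B₁ → (A₀ : Set M) ∩ (A₁ : Set M) = (B₀ : Set M) ∩ (B₁ : Set M)

/-- The first-order language consisting of a single unary function symbol `f`. -/
def unaryLang : FirstOrder.Language :=
  ⟨fun n => match n with | 1 => PUnit | _ => Empty, fun _ => Empty⟩

/-- The `unaryLang`-structure on `ℕ × ZMod k` in which the unary function symbol
is interpreted as `(i, j) ↦ (i, j + 1)`: the disjoint union of `ω`-many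
`f`-cycles of length `k`. -/
instance cycleStr (k : ℕ) : unaryLang.Structure (ℕ × ZMod k) where
  funMap {n} f x :=
    match n, f, x with
    | 1, _, x => ((x 0).1, (x 0).2 + 1)
  RelMap {_} r _ := r.elim

/-!
`M_k` is `ℕ × ZMod k`, the disjoint union of countably many `f`-cycles of length `k`.
Substructures are unions of cycles, finitely generated ones are finite unions, so a finitely
generated substructure with at most `k` elements is empty or a single cycle: any family of them is
pairwise disjoint, hence a sunflower. An embedding of a finite union of cycles into `M_k` is an
injection of cycle indices together with a rotation of each cycle; extending the injection to a
permutation of `ℕ` gives ultrahomogeneity, and moving the cycles of `C` not in `A` to fresh indices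
gives strong amalgamation. A model of the theory is a free `ZMod k`-set, i.e. a disjoint union of
`k`-cycles, so its isomorphism type is determined by its number of cycles, which for an infinite
model is its cardinality.
-/

universe u

theorem exists_equiv_eqOn_of_injOn {α : Type*} [Infinite α] {I : Set α} (hI : I.Finite)
    {p : α → α} (hp : I.InjOn p) : ∃ τ : α ≃ α, Set.EqOn τ p I := by
  obtain ⟨τ, hτ⟩ := Cardinal.extend_function_of_lt ⟨I.domRestrict p, hp.injective⟩
    ((Cardinal.lt_aleph0_iff_set_finite.2 hI).trans_le (Cardinal.aleph0_le_mk α)) ⟨Equiv.refl α⟩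
  exact ⟨τ, fun x hx => hτ ⟨x, hx⟩⟩

theorem mk_eq_of_equiv_prod_finite {Q N : Type u} {F : Type} [Finite F] [Nonempty F]
    (φ : Q × F ≃ N) (hN : Cardinal.aleph0 ≤ Cardinal.mk N) : Cardinal.mk Q = Cardinal.mk N := by
  have : Infinite (Q × F) := Cardinal.infinite_iff.2 (Cardinal.mk_congr φ ▸ hN)
  have : Infinite Q :=
    (infinite_prod.1 this).elim (·.1) fun h => absurd h.2 (not_infinite_iff_finite.2 ‹_›)
  have hF : Cardinal.lift.{_, 0} (Cardinal.mk F) < Cardinal.aleph0 :=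
    Cardinal.lift_lt_aleph0.2 (Cardinal.lt_aleph0_of_finite F)
  rw [← Cardinal.mk_congr φ, Cardinal.mk_prod, Cardinal.lift_uzero, Cardinal.mul_eq_left
    (Cardinal.aleph0_le_mk Q) (hF.le.trans (Cardinal.aleph0_le_mk Q))
    (Cardinal.lift_eq_zero.not.2 (Cardinal.mk_ne_zero F))]

/-- Strong amalgamation from ultrahomogeneity and the absence of algebraicity: realise both copies
of `A` by automorphisms, then move `C` off `B` by an automorphism over `A`. -/
theorem hasSAP_of_isUltrahomogeneous {L : FirstOrder.Language} {M : Type*} [L.Structure M]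
    (huh : L.IsUltrahomogeneous M)
    (hfree : ∀ A B C : L.Substructure M, A.FG → B.FG → C.FG →
      ∃ σ : M ≃[L] M, (∀ a ∈ A, σ a = a) ∧ ∀ c ∈ C, σ c ∈ B → c ∈ A) :
    HasSAP L M := by
  intro A B C hA hB hC i₀ j₀
  obtain ⟨gB, hgB⟩ := huh A hA (B.subtype.comp i₀)
  obtain ⟨gC, hgC⟩ := huh A hA (C.subtype.comp j₀)
  have hi₀ (a : A) : (i₀ a : M) = gB a := DFunLike.congr_fun hgB a
  have hj₀ (a : A) : (j₀ a : M) = gC a := DFunLike.congr_fun hgC a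
  obtain ⟨σ, hσA, hσ⟩ :=
    hfree A (B.map gB.symm.toHom) (C.map gC.symm.toHom) hA (hB.map _) (hC.map _)
  let g : M ≃[L] M := gB.comp (σ.comp gC.symm)
  have hg (a : A) : g (j₀ a) = i₀ a := by simp [g, hj₀, hi₀, hσA a a.2]
  refine ⟨B.subtype, g.toEmbedding.comp C.subtype, Embedding.ext fun a => (hg a).symm, ?_⟩
  ext x
  constructor
  · rintro ⟨⟨b, rfl⟩, c, hc⟩
    change gB (σ (gC.symm c)) = b at hc
    have hcA : gC.symm c ∈ A := hσ _ ⟨c, c.2, rfl⟩ ⟨b, b.2, by simp [← hc]⟩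
    exact ⟨⟨_, hcA⟩, by simp [hi₀, ← hc, hσA _ hcA]⟩
  · rintro ⟨a, rfl⟩
    exact ⟨⟨i₀ a, rfl⟩, j₀ a, hg a⟩

theorem sunflowerSub_of_pairwise_disjoint {L : FirstOrder.Language} {M : Type*} [L.Structure M]
    {X : Set (L.Substructure M)} (hX : X.Pairwise fun A B => Disjoint (A : Set M) B) :
    SunflowerSub L M X := by
  intro A₀ h₀ A₁ h₁ B₀ h₀' B₁ h₁' hA hB
  rw [(hX h₀ h₁ hA).inter_eq, (hX h₀' h₁' hB).inter_eq]

namespace unaryLang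

def symbol : unaryLang.Functions 1 := PUnit.unit

def fn (N : Type*) [unaryLang.Structure N] (x : N) : N := Structure.funMap symbol fun _ => x

section Structures

variable {N P : Type*} [unaryLang.Structure N] [unaryLang.Structure P]

theorem map_fn_iterate (e : N ↪[unaryLang] P) (m : ℕ) (x : N) :
    e ((fn N)^[m] x) = (fn P)^[m] (e x) := by
  induction m with
  | zero => rfl
  | succ m ih =>
    rw [Function.iterate_succ_apply', Function.iterate_succ_apply', ← ih]
    exact e.map_fun symbol _

def lequivOfCommute (e : N ≃ P) (he : ∀ x, e (fn N x) = fn P (e x)) : N ≃[unaryLang] P where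
  toEquiv := e
  map_fun' := fun {n} f x => by
    match n, f with
    | 1, f =>
      have hx : x = fun _ => x 0 := funext fun i => congrArg x (Subsingleton.elim i 0)
      rw [hx]
      exact he (x 0)
  map_rel' := fun r => r.elim

theorem fn_iterate_mem {S : unaryLang.Substructure N} {x : N} (hx : x ∈ S) (m : ℕ) :
    (fn N)^[m] x ∈ S := by
  induction m with
  | zero => exact hx
  | succ m ih =>
    rw [Function.iterate_succ_apply']
    exact S.fun_mem symbol _ fun _ => ih

def iterateTerm {α : Type*} : ℕ → unaryLang.Term α → unaryLang.Term α
  | 0, t => t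
  | n + 1, t => Term.func symbol fun _ => iterateTerm n t

@[simp]
theorem realize_iterateTerm {α : Type*} (v : α → N) (n : ℕ) (t : unaryLang.Term α) :
    (iterateTerm n t).realize v = (fn N)^[n] (t.realize v) := by
  induction n with
  | zero => rfl
  | succ n ih =>
    rw [Function.iterate_succ_apply', ← ih]
    rfl

def periodicSentence (n : ℕ) : unaryLang.Sentence := ∀' (iterateTerm n &0 =' &0)

def aperiodicSentence (n : ℕ) : unaryLang.Sentence := ∀' ∼(iterateTerm n &0 =' &0)

theorem realize_periodicSentence (n : ℕ) :
    N ⊨ periodicSentence n ↔ ∀ x : N, (fn N)^[n] x = x := by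
  simp [periodicSentence, Sentence.Realize, Formula.Realize, Fin.snoc]

theorem realize_aperiodicSentence (n : ℕ) :
    N ⊨ aperiodicSentence n ↔ ∀ x : N, (fn N)^[n] x ≠ x := by
  simp [aperiodicSentence, Sentence.Realize, Formula.Realize, Fin.snoc]

end Structures

section UnionsOfCycles

variable {k : ℕ} [NeZero k] {N : Type u} [unaryLang.Structure N]

abbrev cycleAction (hN : ∀ (n : ℕ) (x : N), (fn N)^[n] x = x ↔ k ∣ n) :
    AddAction (ZMod k) N where
  vadd j x := (fn N)^[j.val] x
  zero_vadd x := by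
    show (fn N)^[(0 : ZMod k).val] x = x
    rw [ZMod.val_zero, Function.iterate_zero_apply]
  add_vadd a b x := by
    show (fn N)^[(a + b).val] x = (fn N)^[a.val] ((fn N)^[b.val] x)
    rw [ZMod.val_add, Function.IsPeriodicPt.iterate_mod_apply ((hN k x).2 dvd_rfl),
      Function.iterate_add_apply]

theorem exists_equiv_prod_zmod (hN : ∀ (n : ℕ) (x : N), (fn N)^[n] x = x ↔ k ∣ n) :
    ∃ (Q : Type u) (φ : Q × ZMod k ≃ N), ∀ q j, φ (q, j + 1) = fn N (φ (q, j)) := by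
  let := cycleAction hN
  have hstab (x : N) : AddAction.stabilizer (ZMod k) x = ⊥ :=
    (AddSubgroup.eq_bot_iff_forall _).2 fun j hj => by
      rw [← ZMod.natCast_zmod_val j, ZMod.natCast_eq_zero_iff]
      exact (hN j.val x).1 hj
  refine ⟨_, (AddAction.selfEquivOrbitsQuotientProd hstab).symm, fun q j => ?_⟩
  show (j + 1) +ᵥ q.out = fn N (j +ᵥ q.out)
  rw [add_comm, ← vadd_vadd]
  show (fn N)^[(1 : ZMod k).val] _ = _
  rw [ZMod.val_one_eq_one_mod, Function.IsPeriodicPt.iterate_mod_apply ((hN k _).2 dvd_rfl)]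
  rfl

theorem nonempty_lequiv_of_iterate_eq_self_iff {N₁ N₂ : Type u} [unaryLang.Structure N₁]
    [unaryLang.Structure N₂] (h₁ : ∀ (n : ℕ) (x : N₁), (fn N₁)^[n] x = x ↔ k ∣ n)
    (h₂ : ∀ (n : ℕ) (x : N₂), (fn N₂)^[n] x = x ↔ k ∣ n)
    (hcard : Cardinal.mk N₁ = Cardinal.mk N₂) (hinf : Cardinal.aleph0 ≤ Cardinal.mk N₁) :
    Nonempty (N₁ ≃[unaryLang] N₂) := by
  obtain ⟨Q₁, φ₁, hφ₁⟩ := exists_equiv_prod_zmod h₁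
  obtain ⟨Q₂, φ₂, hφ₂⟩ := exists_equiv_prod_zmod h₂
  obtain ⟨θ⟩ : Nonempty (Q₁ ≃ Q₂) := Cardinal.eq.1 <| by
    rw [mk_eq_of_equiv_prod_finite φ₁ hinf, mk_eq_of_equiv_prod_finite φ₂ (hcard ▸ hinf), hcard]
  refine ⟨lequivOfCommute (φ₁.symm.trans ((θ.prodCongr (Equiv.refl _)).trans φ₂)) fun x => ?_⟩
  obtain ⟨⟨q, j⟩, rfl⟩ := φ₁.surjective x
  simp [← hφ₁, hφ₂]

end UnionsOfCycles

section Cycles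

variable {k : ℕ}

theorem fn_cycle (x : ℕ × ZMod k) : fn (ℕ × ZMod k) x = (x.1, x.2 + 1) := rfl

theorem fn_iterate_cycle (m : ℕ) (x : ℕ × ZMod k) :
    (fn (ℕ × ZMod k))^[m] x = (x.1, x.2 + m) := by
  induction m with
  | zero => simp
  | succ m ih =>
    rw [Function.iterate_succ_apply', ih, fn_cycle]
    exact Prod.ext rfl (by push_cast; ring)

theorem fn_iterate_cycle_eq_self_iff (n : ℕ) (x : ℕ × ZMod k) :
    (fn (ℕ × ZMod k))^[n] x = x ↔ k ∣ n := by
  rw [fn_iterate_cycle, ← ZMod.natCast_eq_zero_iff]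
  simp [Prod.ext_iff]

theorem iterate_eq_self_iff_of_model (P : (unaryLang.completeTheory (ℕ × ZMod k)).ModelType)
    (n : ℕ) (x : P) : (fn P)^[n] x = x ↔ k ∣ n := by
  by_cases hn : k ∣ n
  · have h : (ℕ × ZMod k) ⊨ periodicSentence n :=
      (realize_periodicSentence n).2 fun y => (fn_iterate_cycle_eq_self_iff n y).2 hn
    exact iff_of_true ((realize_periodicSentence n).1
      (Theory.realize_sentence_of_mem _ (mem_completeTheory.2 h)) x) hn
  · have h : (ℕ × ZMod k) ⊨ aperiodicSentence n :=
      (realize_aperiodicSentence n).2 fun y => (fn_iterate_cycle_eq_self_iff n y).not.2 hn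
    exact iff_of_false ((realize_aperiodicSentence n).1
      (Theory.realize_sentence_of_mem _ (mem_completeTheory.2 h)) x) hn

theorem ncard_fiber (i : ℕ) : (Prod.fst ⁻¹' {i} : Set (ℕ × ZMod k)).ncard = k := by
  have : (Prod.fst ⁻¹' {i} : Set (ℕ × ZMod k)) = {i} ×ˢ Set.univ := by ext; simp
  rw [this, Set.ncard_prod, Set.ncard_singleton, Set.ncard_univ, Nat.card_zmod, one_mul]

def cycleSub (k : ℕ) (I : Set ℕ) : unaryLang.Substructure (ℕ × ZMod k) where
  carrier := Prod.fst ⁻¹' I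
  fun_mem {n} f := by
    match n, f with
    | 1, _ => exact fun x hx => hx 0

def cycleEquiv (τ : ℕ ≃ ℕ) (r : ℕ → ZMod k) : (ℕ × ZMod k) ≃[unaryLang] (ℕ × ZMod k) :=
  lequivOfCommute (τ.prodShear fun i => Equiv.addRight (r i)) fun _ =>
    Prod.ext rfl (add_right_comm _ _ _)

theorem cycleEquiv_apply (τ : ℕ ≃ ℕ) (r : ℕ → ZMod k) (x : ℕ × ZMod k) :
    cycleEquiv τ r x = (τ x.1, x.2 + r x.1) := rfl

variable [NeZero k]

theorem mem_of_fst_eq {S : unaryLang.Substructure (ℕ × ZMod k)} {x y : ℕ × ZMod k}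
    (hx : x ∈ S) (h : y.1 = x.1) : y ∈ S := by
  convert fn_iterate_mem hx (y.2 - x.2).val using 1
  rw [fn_iterate_cycle, ZMod.natCast_zmod_val]
  exact Prod.ext h (by ring)

theorem finite_of_fg {S : unaryLang.Substructure (ℕ × ZMod k)} (hS : S.FG) :
    (S : Set (ℕ × ZMod k)).Finite := by
  obtain ⟨s, rfl⟩ := hS
  have hle : Substructure.closure unaryLang (s : Set (ℕ × ZMod k)) ≤ cycleSub k (Prod.fst '' s) :=
    Substructure.closure_le.2 fun x hx => ⟨x, hx, rfl⟩
  exact ((s.finite_toSet.image Prod.fst).prod (Set.finite_univ (α := ZMod k))).subset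
    fun x hx => ⟨hle hx, trivial⟩

theorem locallyFiniteStr_cycle : LocallyFiniteStr unaryLang (ℕ × ZMod k) := fun s hs =>
  ⟨Substructure.closure unaryLang s, Substructure.subset_closure,
    finite_of_fg (Substructure.fg_closure hs)⟩

theorem embedding_apply_of_fst_eq {S : unaryLang.Substructure (ℕ × ZMod k)}
    (e : S ↪[unaryLang] ℕ × ZMod k) {x y : S} (h : (y : ℕ × ZMod k).1 = (x : ℕ × ZMod k).1) :
    e y = ((e x).1, (e x).2 + ((y : ℕ × ZMod k).2 - (x : ℕ × ZMod k).2)) := by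
  set m := ((y : ℕ × ZMod k).2 - (x : ℕ × ZMod k).2).val
  have hy : y = (fn S)^[m] x := Subtype.ext <| by
    change _ = S.subtype ((fn S)^[m] x)
    rw [map_fn_iterate, fn_iterate_cycle, ZMod.natCast_zmod_val]
    exact Prod.ext h (by simp)
  rw [congrArg e hy, map_fn_iterate, fn_iterate_cycle, ZMod.natCast_zmod_val]

theorem isUltrahomogeneous_cycle : unaryLang.IsUltrahomogeneous (ℕ × ZMod k) := by
  classical
  intro S hS e
  let base (i : ℕ) : ℕ × ZMod k := if h : (i, 0) ∈ S then e ⟨(i, 0), h⟩ else (i, 0)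
  have he (x : S) : e x = ((base (x : ℕ × ZMod k).1).1,
      (x : ℕ × ZMod k).2 + (base (x : ℕ × ZMod k).1).2) := by
    have h0 : ((x : ℕ × ZMod k).1, (0 : ZMod k)) ∈ S := mem_of_fst_eq x.2 rfl
    rw [show base _ = e ⟨_, h0⟩ from dif_pos h0,
      embedding_apply_of_fst_eq e (x := ⟨_, h0⟩) (y := x) rfl]
    exact Prod.ext rfl (by simp [add_comm])
  have hinj : (Prod.fst '' (S : Set (ℕ × ZMod k))).InjOn fun i => (base i).1 := by
    rintro _ ⟨x, hx, rfl⟩ _ ⟨y, hy, rfl⟩ hxy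
    have := e.injective (a₁ := ⟨(x.1, (base y.1).2 - (base x.1).2), mem_of_fst_eq hx rfl⟩)
      (a₂ := ⟨(y.1, 0), mem_of_fst_eq hy rfl⟩) (by rw [he, he]; exact Prod.ext hxy (by simp))
    exact congrArg (fun z : S => (z : ℕ × ZMod k).1) this
  obtain ⟨τ, hτ⟩ := exists_equiv_eqOn_of_injOn ((finite_of_fg hS).image Prod.fst) hinj
  refine ⟨cycleEquiv τ fun i => (base i).2, Embedding.ext fun x => ?_⟩
  rw [he]
  exact Prod.ext (hτ ⟨x, x.2, rfl⟩).symm rfl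

/-- `σ` fixes the cycles of `A` and moves every other cycle of `C` beyond all cycles of `A`, `B`
and `C`. -/
theorem exists_lequiv_fixing_avoiding (A B C : unaryLang.Substructure (ℕ × ZMod k))
    (hA : A.FG) (hB : B.FG) (hC : C.FG) :
    ∃ σ : (ℕ × ZMod k) ≃[unaryLang] (ℕ × ZMod k),
      (∀ a ∈ A, σ a = a) ∧ ∀ c ∈ C, σ c ∈ B → c ∈ A := by
  classical
  set IA := Prod.fst '' (A : Set (ℕ × ZMod k))
  obtain ⟨N, hN⟩ :=
    (((finite_of_fg hA).union ((finite_of_fg hB).union (finite_of_fg hC))).image Prod.fst).bddAbove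
  have hle {x : ℕ × ZMod k} (hx : x ∈ A ∨ x ∈ B ∨ x ∈ C) : x.1 ≤ N := hN ⟨x, hx, rfl⟩
  let p (i : ℕ) : ℕ := if i ∈ IA then i else i + N + 1
  have hinj : (IA ∪ Prod.fst '' (C : Set (ℕ × ZMod k))).InjOn p := by
    rintro _ (⟨x, hx, rfl⟩ | ⟨x, hx, rfl⟩) _ (⟨y, hy, rfl⟩ | ⟨y, hy, rfl⟩) hxy <;>
      have := hle (x := x) (by tauto) <;> have := hle (x := y) (by tauto) <;>
      simp only [p] at hxy <;> split_ifs at hxy <;> omega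
  obtain ⟨τ, hτ⟩ := exists_equiv_eqOn_of_injOn
    (((finite_of_fg hA).image Prod.fst).union ((finite_of_fg hC).image Prod.fst)) hinj
  refine ⟨cycleEquiv τ 0, fun a ha => ?_, fun c hc hcB => ?_⟩
  · have hτa : τ a.1 = a.1 := (hτ (.inl ⟨a, ha, rfl⟩)).trans (if_pos ⟨a, ha, rfl⟩)
    simp [cycleEquiv_apply, hτa]
  · by_contra hcA
    have hcA' : c.1 ∉ IA := fun ⟨a, ha, hac⟩ => hcA (mem_of_fst_eq ha hac.symm)
    have hτc : τ c.1 = c.1 + N + 1 := (hτ (.inr ⟨c, hc, rfl⟩)).trans (if_neg hcA')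
    have := hle (Or.inr (Or.inl hcB))
    simp only [cycleEquiv_apply, hτc] at this
    omega

theorem coe_eq_fiber_of_card_le {S : unaryLang.Substructure (ℕ × ZMod k)} (hS : S.FG)
    (hcard : Nat.card S ≤ k) {x : ℕ × ZMod k} (hx : x ∈ S) :
    (S : Set (ℕ × ZMod k)) = Prod.fst ⁻¹' {x.1} :=
  (Set.eq_of_subset_of_ncard_le (s := Prod.fst ⁻¹' {x.1}) (fun _ hy => mem_of_fst_eq hx hy)
    (by rwa [ncard_fiber, ← Nat.card_coe_set_eq]) (finite_of_fg hS)).symm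

theorem pairwise_disjoint_of_card_le {X : Set (unaryLang.Substructure (ℕ × ZMod k))}
    (hX : ∀ S ∈ X, S.FG ∧ Nat.card S ≤ k) :
    X.Pairwise fun S T => Disjoint (S : Set (ℕ × ZMod k)) T := by
  refine fun S hS T hT hST => Set.disjoint_left.2 fun x hxS hxT => hST (SetLike.coe_injective ?_)
  rw [coe_eq_fiber_of_card_le (hX S hS).1 (hX S hS).2 hxS,
    coe_eq_fiber_of_card_le (hX T hT).1 (hX T hT).2 hxT]

theorem totallyCategorical_cycle : TotallyCategorical.{w} unaryLang (ℕ × ZMod k) :=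
  fun _ hκ P Q hP hQ => nonempty_lequiv_of_iterate_eq_self_iff (iterate_eq_self_iff_of_model P)
    (iterate_eq_self_iff_of_model Q) (hP.trans hQ.symm) (hP ▸ hκ)

end Cycles

end unaryLang

/-- For every `k ≥ 1` there is a countably infinite, locally finite structure
`M_k` in the language of a single unary function which is ultrahomogeneous, has
the strong amalgamation property, is totally categorical, and in which every
family of at least `n` finitely generated substructures of cardinality at most
`k` contains a sunflower of size `n` (i.e. `SF[M_k](n, k) = n`). -/
theorem exists_structure_SF_eq (k : ℕ) (hk : 1 ≤ k) :
    ∃ (M : Type) (strM : unaryLang.Structure M),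
      letI := strM
      Countable M ∧ Infinite M ∧ LocallyFiniteStr unaryLang M ∧
      unaryLang.IsUltrahomogeneous M ∧ HasSAP unaryLang M ∧
      TotallyCategorical unaryLang M ∧
      ∀ (n : ℕ) (X : Finset (unaryLang.Substructure M)),
        (∀ A ∈ X, A.FG ∧ Nat.card A ≤ k) → n ≤ X.card →
        ∃ S ⊆ X, S.card = n ∧
          SunflowerSub unaryLang M (S : Set (unaryLang.Substructure M)) := by
  have : NeZero k := ⟨by omega⟩
  refine ⟨ℕ × ZMod k, cycleStr k, inferInstance, inferInstance, unaryLang.locallyFiniteStr_cycle,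
    unaryLang.isUltrahomogeneous_cycle, hasSAP_of_isUltrahomogeneous
      unaryLang.isUltrahomogeneous_cycle unaryLang.exists_lequiv_fixing_avoiding,
    unaryLang.totallyCategorical_cycle, fun n X hX hn => ?_⟩
  obtain ⟨S, hSX, rfl⟩ := Finset.exists_subset_card_eq hn
  exact ⟨S, hSX, rfl, sunflowerSub_of_pairwise_disjoint
    ((unaryLang.pairwise_disjoint_of_card_le hX).mono (Finset.coe_subset.2 hSX))⟩
end

section
/- Let k ≥ 1, let L be the first-order language consisting of a single unary function symbol f, and let M_k be the L-structure with underlying set ℕ × ZMod k in which f is interpreted as the map (i,j) ↦ (i, j+1). Then M_k has the strong amalgamation property: whenever i₀ : A → B and j₀ : A → C are embeddings of finitely generated substructures of M_k, there are embeddings i₁ : B → M_k and j₁ : C → M_k such that i₁ ∘ i₀ = j₁ ∘ j₀ and range(i₁) ∩ range(j₁) = range(i₁ ∘ i₀). -/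
open FirstOrder FirstOrder.Language

universe w

/-! Every substructure of `M_k` is a union of `f`-cycles, and an embedding carries each cycle
of its domain onto a cycle. Hence the copy `j₀(A)` of `A` in `C` is a union of cycles of `C`,
and `j₁` can be taken to be `i₀ ∘ j₀⁻¹` there and, on the remaining cycles of `C`, a shift onto
cycles that `B` does not meet. The two pieces have disjoint images, which gives injectivity of
`j₁` and the strong amalgamation condition at once. -/

open Function

namespace unaryLang

variable {A M : Type*} [unaryLang.Structure A] [unaryLang.Structure M]

def op (x : M) : M :=
  Structure.funMap (L := unaryLang) (n := 1) PUnit.unit fun _ => x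

def embeddingOfCommute (f : A → M) (hf : Injective f) (hop : ∀ x, f (op x) = op (f x)) :
    A ↪[unaryLang] M where
  toFun := f
  inj' := hf
  map_fun' {n} F x := match n, F with
    | 1, _ => by
      have hx : x = fun _ => x 0 := funext fun i => congrArg x (Subsingleton.elim i 0)
      rw [hx]
      exact hop (x 0)
  map_rel' r := r.elim

end unaryLang

open unaryLang

namespace FirstOrder.Language.Embedding

variable {A C M : Type*} [unaryLang.Structure A] [unaryLang.Structure C] [unaryLang.Structure M]

theorem map_op (e : A ↪[unaryLang] M) (x : A) : e (op x) = op (e x) :=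
  e.map_fun (n := 1) PUnit.unit fun _ => x

theorem iterate_map_op (e : A ↪[unaryLang] M) (n : ℕ) (x : A) :
    e (op^[n] x) = op^[n] (e x) :=
  (Semiconj.iterate_right (fun x => e.map_op x) n).eq x

variable {n : ℕ}

theorem iterate_op_eq_self (e : A ↪[unaryLang] M) (hper : ∀ y : M, op^[n] y = y)
    (x : A) : op^[n] x = x :=
  e.injective (by rw [e.iterate_map_op, hper])

theorem mem_range_of_op_mem_range (hn : 0 < n) (hper : ∀ y : C, op^[n] y = y)
    (e : A ↪[unaryLang] C) {x : C} (h : op x ∈ Set.range e) : x ∈ Set.range e := by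
  obtain ⟨m, rfl⟩ := Nat.exists_eq_add_one_of_ne_zero hn.ne'
  obtain ⟨a, ha⟩ := h
  exact ⟨op^[m] a, by rw [e.iterate_map_op, ha, ← iterate_succ_apply, hper]⟩

end FirstOrder.Language.Embedding

theorem Function.Injective.injective_extend {α β γ : Type*} {f : α → β} {g : α → γ}
    {e' : β → γ} (hf : Injective f) (hg : Injective g) (he' : Injective e')
    (hdisj : Disjoint (Set.range g) (Set.range e')) : Injective (extend f g e') := by
  intro b₁ b₂ h
  rcases em (∃ a, f a = b₁) with ⟨a₁, rfl⟩ | h₁ <;>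
    rcases em (∃ a, f a = b₂) with ⟨a₂, rfl⟩ | h₂
  · rw [hf.extend_apply, hf.extend_apply] at h
    rw [hg h]
  · rw [hf.extend_apply, extend_apply' _ _ _ h₂] at h
    exact (hdisj.ne_of_mem ⟨a₁, rfl⟩ ⟨b₂, rfl⟩ h).elim
  · rw [hf.extend_apply, extend_apply' _ _ _ h₁] at h
    exact (hdisj.ne_of_mem ⟨a₂, rfl⟩ ⟨b₁, rfl⟩ h.symm).elim
  · rw [extend_apply' _ _ _ h₁, extend_apply' _ _ _ h₂] at h
    exact he' h

namespace unaryLang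

section Amalgamation

variable {A B C M : Type*} [unaryLang.Structure A] [unaryLang.Structure B]
  [unaryLang.Structure C] [unaryLang.Structure M] {n : ℕ}
  (i₀ : A ↪[unaryLang] B) (j₀ : A ↪[unaryLang] C) (i₁ : B ↪[unaryLang] M) (g : C ↪[unaryLang] M)

theorem extend_map_op (hn : 0 < n) (hper : ∀ y : M, op^[n] y = y) (c : C) :
    extend j₀ (i₁ ∘ i₀) g (op c) = op (extend j₀ (i₁ ∘ i₀) g c) := by
  by_cases hc : c ∈ Set.range j₀
  · obtain ⟨a, rfl⟩ := hc
    rw [← j₀.map_op, j₀.injective.extend_apply, j₀.injective.extend_apply, comp_apply,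
      comp_apply, i₀.map_op, i₁.map_op]
  · have hc' : op c ∉ Set.range j₀ :=
      fun h => hc (j₀.mem_range_of_op_mem_range hn (g.iterate_op_eq_self hper) h)
    rw [extend_apply' _ _ _ hc', extend_apply' _ _ _ hc, g.map_op]

theorem exists_strong_amalgam (hn : 0 < n) (hper : ∀ y : M, op^[n] y = y)
    (hdisj : Disjoint (Set.range i₁) (Set.range g)) :
    ∃ j₁ : C ↪[unaryLang] M, i₁.comp i₀ = j₁.comp j₀ ∧
      Set.range i₁ ∩ Set.range j₁ = Set.range (i₁.comp i₀) := by
  have hinj : Injective (extend j₀ (i₁ ∘ i₀) g) :=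
    j₀.injective.injective_extend (i₁.injective.comp i₀.injective) g.injective
      (hdisj.mono_left (Set.range_comp_subset_range _ _))
  refine ⟨embeddingOfCommute _ hinj (extend_map_op i₀ j₀ i₁ g hn hper), ?_, ?_⟩
  · ext a
    exact (j₀.injective.extend_apply _ _ a).symm
  · refine subset_antisymm ?_ ?_
    · rintro _ ⟨⟨b, rfl⟩, c, hc⟩
      change extend j₀ (i₁ ∘ i₀) g c = i₁ b at hc
      by_cases hcA : ∃ a, j₀ a = c
      · obtain ⟨a, rfl⟩ := hcA
        exact ⟨a, by rw [← hc, j₀.injective.extend_apply]; rfl⟩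
      · rw [extend_apply' _ _ _ hcA] at hc
        exact (hdisj.ne_of_mem ⟨b, rfl⟩ ⟨c, rfl⟩ hc.symm).elim
    · rintro _ ⟨a, rfl⟩
      exact ⟨⟨i₀ a, rfl⟩, j₀ a, j₀.injective.extend_apply _ _ a⟩

end Amalgamation

end unaryLang

namespace cycleStr

variable {k : ℕ}

theorem op_apply (x : ℕ × ZMod k) : op x = (x.1, x.2 + 1) := rfl

theorem iterate_op_apply (m : ℕ) (x : ℕ × ZMod k) : op^[m] x = (x.1, x.2 + m) := by
  induction m with
  | zero => simp
  | succ m ih =>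
    rw [iterate_succ_apply', ih, op_apply, Nat.cast_succ, add_assoc]

theorem iterate_op_self (x : ℕ × ZMod k) : op^[k] x = x := by
  simp [iterate_op_apply]

def shift (N : ℕ) : (ℕ × ZMod k) ↪[unaryLang] (ℕ × ZMod k) :=
  embeddingOfCommute (fun x => (x.1 + N, x.2))
    (fun _ _ h => by
      simp only [Prod.mk.injEq, Nat.add_right_cancel_iff] at h
      exact Prod.ext h.1 h.2)
    fun _ => rfl

theorem exists_fst_le_of_fg {S : unaryLang.Substructure (ℕ × ZMod k)} (hS : S.FG) :
    ∃ N, ∀ x ∈ S, x.1 ≤ N := by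
  obtain ⟨s, rfl⟩ := hS
  let bounded : unaryLang.Substructure (ℕ × ZMod k) :=
    { carrier := {x | x.1 ≤ s.sup Prod.fst}
      fun_mem := fun {n} f x hx => match n, f with
        | 1, _ => hx 0 }
  exact ⟨s.sup Prod.fst, fun x hx =>
    (Substructure.closure_le (S := bounded)).2 (fun y hy => Finset.le_sup (f := Prod.fst) hy) hx⟩

theorem disjoint_range_shift {S : Set (ℕ × ZMod k)} {N : ℕ} (hN : ∀ x ∈ S, x.1 ≤ N) :
    Disjoint S (Set.range (shift (N + 1))) := by
  rw [Set.disjoint_left]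
  rintro _ hx ⟨y, rfl⟩
  have := hN _ hx
  change y.1 + (N + 1) ≤ N at this
  omega

end cycleStr

/-- The disjoint union of `ω`-many `f`-cycles of length `k ≥ 1` has the strong
amalgamation property. -/
theorem cycleStructure_hasSAP (k : ℕ) (hk : 1 ≤ k) :
    HasSAP unaryLang (ℕ × ZMod k) := by
  intro A B C _ hB _ i₀ j₀
  obtain ⟨N, hN⟩ := cycleStr.exists_fst_le_of_fg hB
  have hdisj : Disjoint (Set.range B.subtype)
      (Set.range ((cycleStr.shift (N + 1)).comp C.subtype)) := by
    rw [Substructure.coe_subtype, Subtype.range_coe]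
    exact (cycleStr.disjoint_range_shift hN).mono_right (by rintro _ ⟨c, rfl⟩; exact ⟨c, rfl⟩)
  obtain ⟨j₁, hcomp, hrange⟩ :=
    exists_strong_amalgam i₀ j₀ B.subtype _ hk cycleStr.iterate_op_self hdisj
  exact ⟨B.subtype, j₁, hcomp, hrange⟩
end
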